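/- arXiv:1804.05637 — 3 statements merged into one kernel-verified Lean document; each statement's English description precedes it below -/
import Mathlib

section
/- Let M be a 3-connected matroid and let X and Y be 3-separating subsets of E(M). If |X ∩ Y| ≥ 2, then X ∪ Y is 3-separating; and if |E(M) − (X ∪ Y)| ≥ 2, then X ∩ Y is 3-separating. -/
open Set Matroid

variable {α β : Type*}

namespace NDP

/-- The rank of a set `X` in a matroid `M`: the largest cardinality of an
independent subset of `X` (intended for finite matroids). -/
noncomputable def rk (M : Matroid α) (X : Set α) : ℕ :=
  sSup {n : ℕ | ∃ I, M.Indep I ∧ I ⊆ X ∧ I.ncard = n}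

/-- The connectivity function `λ_M(X) = r(X) + r(E − X) − r(M)`, valued in `ℤ`. -/
noncomputable def lam (M : Matroid α) (X : Set α) : ℤ :=
  (rk M X : ℤ) + (rk M (M.E \ X) : ℤ) - (rk M M.E : ℤ)

/-- Deletion of a set of elements. -/
def delete (M : Matroid α) (D : Set α) : Matroid α := M ↾ (M.E \ D)

/-- Contraction of a set of elements, defined by duality. -/
def contract (M : Matroid α) (C : Set α) : Matroid α := (delete M✶ C)✶

/-- `X` is a `k`-separating set of `M`. -/
def Separating (M : Matroid α) (k : ℕ) (X : Set α) : Prop :=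
  X ⊆ M.E ∧ lam M X ≤ (k : ℤ) - 1

/-- `X` is exactly `k`-separating in `M`. -/
def ExactlySeparating (M : Matroid α) (k : ℕ) (X : Set α) : Prop :=
  X ⊆ M.E ∧ lam M X = (k : ℤ) - 1

/-- `(X, M.E \ X)` is a `k`-separation of `M`. -/
def IsKSeparation (M : Matroid α) (k : ℕ) (X : Set α) : Prop :=
  Separating M k X ∧ k ≤ X.ncard ∧ k ≤ (M.E \ X).ncard

/-- A matroid is connected if it has no 1-separations. -/
def Connected (M : Matroid α) : Prop := ∀ X, ¬ IsKSeparation M 1 X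

/-- A matroid is 3-connected if it has no k-separations for k < 3. -/
def ThreeConnected (M : Matroid α) : Prop := ∀ k < 3, ∀ X, ¬ IsKSeparation M k X

/-- A circuit: a minimal dependent set. -/
def Circuit (M : Matroid α) (C : Set α) : Prop :=
  C ⊆ M.E ∧ ¬ M.Indep C ∧ ∀ D, D ⊂ C → M.Indep D

def Cocircuit (M : Matroid α) (C : Set α) : Prop := Circuit M✶ C

def Triangle (M : Matroid α) (T : Set α) : Prop := Circuit M T ∧ T.ncard = 3

def Triad (M : Matroid α) (T : Set α) : Prop := Cocircuit M T ∧ T.ncard = 3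

/-- `N` is a minor of `M`. -/
def Minor (N M : Matroid α) : Prop := ∃ C D, N = delete (contract M C) D

/-- `M` has a minor isomorphic to `N`. -/
def IsoMinor (M : Matroid α) (N : Matroid β) : Prop :=
  ∃ (f : β → α) (hf : Set.InjOn f N.E), Minor (N.map f hf) M

/-- `X` is a set of representatives for the simplification of `M`:
one non-loop element from each parallel class. -/
def SimpRep (M : Matroid α) (X : Set α) : Prop :=
  X ⊆ M.E ∧ (∀ e ∈ X, M.Indep {e}) ∧
  (∀ e ∈ M.E, M.Indep {e} → ∃ f ∈ X, f ∈ M.closure {e}) ∧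
  (∀ f ∈ X, ∀ g ∈ X, f ∈ M.closure {g} → f = g)

/-- `si M` (the simplification of `M`) is a 3-connected matroid. -/
def SiThreeConnected (M : Matroid α) : Prop :=
  ∀ X, SimpRep M X → ThreeConnected (M ↾ X)

/-- `co M` (the cosimplification of `M`) is a 3-connected matroid. -/
def CoThreeConnected (M : Matroid α) : Prop := SiThreeConnected M✶

/-- The restriction of `M` to `P` is isomorphic to the rank-`r` uniform matroid on `P`. -/
def UnifRestr (M : Matroid α) (r : ℕ) (P : Set α) : Prop :=
  P ⊆ M.E ∧ ∀ X ⊆ P, (M.Indep X ↔ X.ncard ≤ r)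

/-- A set is fully closed if it is closed in `M` and in `M✶`. -/
def FullClosed (M : Matroid α) (F : Set α) : Prop :=
  M.closure F = F ∧ M✶.closure F = F

/-- The full closure of `X`: the intersection of all fully closed sets containing `X`. -/
def fcl (M : Matroid α) (X : Set α) : Set α :=
  ⋂₀ {F | X ⊆ F ∧ FullClosed M F}

/-- `(X, {z}, Y)` is a vertical 3-separation of `M`. -/
def VertThreeSep (M : Matroid α) (X : Set α) (z : α) (Y : Set α) : Prop :=
  X ∪ {z} ∪ Y = M.E ∧ Disjoint X Y ∧ z ∉ X ∧ z ∉ Y ∧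
  IsKSeparation M 3 (X ∪ {z}) ∧ 3 ≤ rk M (X ∪ {z}) ∧ 3 ≤ rk M Y ∧
  IsKSeparation M 3 X ∧ 3 ≤ rk M X ∧ 3 ≤ rk M (Y ∪ {z}) ∧
  z ∈ M.closure X ∧ z ∈ M.closure Y

/-- `M` is a wheel or a whirl: its ground set has a cyclic ordering of alternating
spokes and rims in which consecutive triples are alternately triangles and triads. -/
def IsWheelOrWhirl (M : Matroid α) : Prop :=
  ∃ (n : ℕ) (s r : ZMod n → α), 2 ≤ n ∧
    Function.Injective (fun p : ZMod n × Bool => if p.2 then s p.1 else r p.1) ∧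
    Set.range s ∪ Set.range r = M.E ∧
    ∀ i : ZMod n, Triangle M {s i, r i, s (i + 1)} ∧ Triad M {r i, s (i + 1), r (i + 1)}

/-- `f` (restricted to `{0, …, k−1}`) is a fan ordering of length `k` in `M`. -/
def IsFanOrd (M : Matroid α) (k : ℕ) (f : ℕ → α) : Prop :=
  3 ≤ k ∧ Set.InjOn f (Set.Iio k) ∧ (∀ i < k, f i ∈ M.E) ∧
  (Triangle M {f 0, f 1, f 2} ∨ Triad M {f 0, f 1, f 2}) ∧
  ∀ i, i + 3 < k →
    (Triangle M {f i, f (i+1), f (i+2)} → Triad M {f (i+1), f (i+2), f (i+3)}) ∧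
    (Triad M {f i, f (i+1), f (i+2)} → Triangle M {f (i+1), f (i+2), f (i+3)})

/-- `F` is a fan of `M`. -/
def IsFan (M : Matroid α) (F : Set α) : Prop :=
  ∃ k f, IsFanOrd M k f ∧ F = f '' Set.Iio k

/-- `F` is a maximal fan of `M`. -/
def IsMaximalFan (M : Matroid α) (F : Set α) : Prop :=
  IsFan M F ∧ ∀ F', IsFan M F' → F ⊆ F' → F' = F

end NDP


/-! By submodularity, `λ(X ∪ Y) + λ(X ∩ Y) ≤ λ(X) + λ(Y) ≤ 4`. If `X ∩ Y` has at least two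
elements on each side, 3-connectivity forces `λ(X ∩ Y) ≥ 2`, hence `λ(X ∪ Y) ≤ 2`; otherwise the
complement of `X ∪ Y` has at most one element and `λ(X ∪ Y) ≤ 1` directly. The statement about
`X ∩ Y` is the statement about `X ∪ Y` applied to the complements `E − X` and `E − Y`. -/

namespace NDP

variable {M : Matroid α} {X Y : Set α}

lemma cast_rk_eq_eRk (M : Matroid α) [M.RankFinite] (X : Set α) : (rk M X : ℕ∞) = M.eRk X := by
  obtain ⟨I, hI⟩ := M.exists_isBasis' X
  have hIfin : I.Finite := hI.indep.finite
  have hmax : IsGreatest {n : ℕ | ∃ J, M.Indep J ∧ J ⊆ X ∧ J.ncard = n} I.ncard := by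
    refine ⟨⟨I, hI.indep, hI.subset, rfl⟩, ?_⟩
    rintro _ ⟨J, hJ, hJX, rfl⟩
    have hle : J.encard ≤ I.encard := hI.encard_eq_eRk ▸ hJ.encard_le_eRk_of_subset hJX
    rwa [← hJ.finite.cast_ncard_eq, ← hIfin.cast_ncard_eq, Nat.cast_le] at hle
  rw [rk, hmax.csSup_eq, hIfin.cast_ncard_eq, hI.encard_eq_eRk]

lemma rk_mono [M.RankFinite] (hXY : X ⊆ Y) : rk M X ≤ rk M Y := by
  have := M.eRk_mono hXY
  rwa [← cast_rk_eq_eRk, ← cast_rk_eq_eRk, Nat.cast_le] at this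

lemma rk_le_ncard [M.RankFinite] (hX : X.Finite) : rk M X ≤ X.ncard := by
  have := M.eRk_le_encard X
  rwa [← cast_rk_eq_eRk, ← hX.cast_ncard_eq, Nat.cast_le] at this

lemma rk_inter_add_rk_union_le (M : Matroid α) [M.RankFinite] (X Y : Set α) :
    rk M (X ∩ Y) + rk M (X ∪ Y) ≤ rk M X + rk M Y := by
  simpa only [← cast_rk_eq_eRk, ← Nat.cast_add, Nat.cast_le] using
    M.eRk_inter_add_eRk_union_le X Y

lemma lam_inter_add_lam_union_le (M : Matroid α) [M.RankFinite] (X Y : Set α) :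
    lam M (X ∩ Y) + lam M (X ∪ Y) ≤ lam M X + lam M Y := by
  have h := rk_inter_add_rk_union_le M X Y
  have hc := rk_inter_add_rk_union_le M (M.E \ X) (M.E \ Y)
  rw [sdiff_inter_sdiff, ← sdiff_inter] at hc
  unfold lam
  omega

lemma lam_diff_eq (hX : X ⊆ M.E) : lam M (M.E \ X) = lam M X := by
  rw [lam, lam, sdiff_sdiff_cancel_left hX, add_comm (rk M (M.E \ X) : ℤ)]

lemma lam_le_ncard [M.RankFinite] (hX : X.Finite) : lam M X ≤ X.ncard := by
  have h1 := rk_le_ncard (M := M) hX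
  have h2 := rk_mono (M := M) (sdiff_subset : M.E \ X ⊆ M.E)
  unfold lam
  omega

lemma ThreeConnected.two_le_lam (hM : ThreeConnected M) (hXE : X ⊆ M.E) (hX : 2 ≤ X.ncard)
    (hXc : 2 ≤ (M.E \ X).ncard) : 2 ≤ lam M X := by
  by_contra! h
  exact hM 2 (by norm_num) X ⟨⟨hXE, by push_cast; omega⟩, hX, hXc⟩

lemma Separating.diff {k : ℕ} (hX : Separating M k X) : Separating M k (M.E \ X) :=
  ⟨sdiff_subset, (lam_diff_eq hX.1).trans_le hX.2⟩

lemma Separating.union_of_two_le_ncard_inter [M.Finite] (hM : ThreeConnected M)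
    (hX : Separating M 3 X) (hY : Separating M 3 Y) (hXY : 2 ≤ (X ∩ Y).ncard) :
    Separating M 3 (X ∪ Y) := by
  have hsub := lam_inter_add_lam_union_le M X Y
  refine ⟨union_subset hX.1 hY.1, ?_⟩
  by_cases hc : 2 ≤ (M.E \ (X ∩ Y)).ncard
  · have := hM.two_le_lam (inter_subset_left.trans hX.1) hXY hc
    linarith [hX.2, hY.2, show ((3 : ℕ) : ℤ) - 1 = 2 by norm_num]
  · have hsmall : (M.E \ (X ∪ Y)).ncard ≤ (M.E \ (X ∩ Y)).ncard :=
      ncard_le_ncard (sdiff_subset_sdiff_right (inter_subset_left.trans subset_union_left))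
        M.ground_finite.sdiff
    have := lam_le_ncard (M := M) (M.ground_finite.sdiff (t := X ∪ Y))
    rw [lam_diff_eq (union_subset hX.1 hY.1)] at this
    push_cast
    omega

lemma Separating.inter_of_two_le_ncard_diff_union [M.Finite] (hM : ThreeConnected M)
    (hX : Separating M 3 X) (hY : Separating M 3 Y) (hXY : 2 ≤ (M.E \ (X ∪ Y)).ncard) :
    Separating M 3 (X ∩ Y) := by
  rw [← sdiff_inter_sdiff] at hXY
  have h := (hX.diff.union_of_two_le_ncard_inter hM hY.diff hXY).diff
  rwa [← sdiff_inter, sdiff_sdiff_cancel_left (inter_subset_left.trans hX.1)] at h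

end NDP

/-- Uncrossing of 3-separating sets in a 3-connected matroid. -/
theorem stmt2 (M : Matroid α) [M.Finite] (hM : NDP.ThreeConnected M)
    (X Y : Set α) (hX : NDP.Separating M 3 X) (hY : NDP.Separating M 3 Y) :
    (2 ≤ (X ∩ Y).ncard → NDP.Separating M 3 (X ∪ Y)) ∧
    (2 ≤ (M.E \ (X ∪ Y)).ncard → NDP.Separating M 3 (X ∩ Y)) :=
  ⟨hX.union_of_two_le_ncard_inter hM hY, hX.inter_of_two_le_ncard_diff_union hM hY⟩
end

section
/- Let (X, Y) be an exactly 3-separating partition of a 3-connected matroid M with |X| ≥ 3 and x ∈ X. Then (X − x, Y ∪ x) is exactly 3-separating if and only if x lies in cl(X − x) ∩ cl(Y) or in cl*(X − x) ∩ cl*(Y). -/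
open Set Matroid

variable {α β : Type*}

/-! Moving `x` from `X` to `Y` lowers `r(X)` by one unless `x ∈ cl(X − x)` and raises `r(Y)` by
one unless `x ∈ cl(Y)`, so `λ` is unchanged exactly when both or neither of these memberships
hold. For `x ∈ E − Z`, `x ∈ cl*(Z)` says that `x` is a loop of `M✶ ／ Z`, i.e. a coloop of
`M ＼ Z`, i.e. `x ∉ cl(E − Z − x)`; this turns "neither" into `x ∈ cl*(X − x) ∩ cl*(Y)`. -/

namespace Matroid

variable {M : Matroid α} {X : Set α} {e : α}

lemma eRk_insert_eq_of_mem_closure (he : e ∈ M.closure X) : M.eRk (insert e X) = M.eRk X := by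
  rw [← eRk_closure_eq, closure_insert_eq_of_mem_closure he, eRk_closure_eq]

lemma mem_dual_closure_iff_notMem_closure_compl (he : e ∈ M.E \ X) :
    e ∈ M✶.closure X ↔ e ∉ M.closure (M.E \ insert e X) := by
  have hloop : e ∈ M✶.closure X ↔ (M✶ ／ X).IsLoop e := by
    rw [isLoop_iff, contract_loops_eq, mem_sdiff, and_iff_left he.2]
  have hdel : (M ＼ X).closure ((M ＼ X).E \ {e}) = M.closure (M.E \ insert e X) \ X := by
    rw [delete_closure_eq, delete_ground]
    congr 2
    ext a
    simp only [mem_sdiff, mem_singleton_iff, mem_insert_iff]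
    tauto
  rw [hloop, ← dual_isColoop_iff_isLoop, dual_contract_dual,
    isColoop_iff_notMem_closure_compl (by simpa using he), hdel, mem_sdiff, and_iff_left he.2]

end Matroid

namespace NDP

variable {M : Matroid α} {X : Set α} {e : α}

lemma natCast_rk_eq_eRk [M.RankFinite] (X : Set α) : (rk M X : ℕ∞) = M.eRk X := by
  obtain ⟨I, hI⟩ := M.exists_isBasis' X
  have hmax : IsGreatest {n : ℕ | ∃ J, M.Indep J ∧ J ⊆ X ∧ J.ncard = n} I.ncard := by
    refine ⟨⟨I, hI.indep, hI.subset, rfl⟩, ?_⟩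
    rintro _ ⟨J, hJ, hJX, rfl⟩
    have := hJ.encard_le_eRk_of_subset hJX
    rw [← hI.encard_eq_eRk, ← hJ.finite.cast_ncard_eq, ← hI.indep.finite.cast_ncard_eq] at this
    exact_mod_cast this
  rw [rk, hmax.csSup_eq, hI.indep.finite.cast_ncard_eq, hI.encard_eq_eRk]

open Classical in
lemma rk_insert_eq_ite [M.RankFinite] (he : e ∈ M.E) :
    rk M (insert e X) = rk M X + if e ∈ M.closure X then 0 else 1 := by
  apply ENat.natCast_inj.1
  push_cast [natCast_rk_eq_eRk]
  split_ifs with h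
  · simpa using M.eRk_insert_eq_of_mem_closure h
  · exact M.eRk_insert_eq_add_one ⟨he, h⟩

lemma lam_sdiff_singleton_eq_lam_iff [M.RankFinite] (hX : X ⊆ M.E) (he : e ∈ X) :
    lam M (X \ {e}) = lam M X ↔ (e ∈ M.closure (X \ {e}) ↔ e ∈ M.closure (M.E \ X)) := by
  have hcompl : M.E \ (X \ {e}) = insert e (M.E \ X) := by
    rw [sdiff_sdiff_right, inter_eq_right.2 (singleton_subset_iff.2 (hX he)), union_singleton]
  have hrk := rk_insert_eq_ite (M := M) (X := X \ {e}) (hX he)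
  rw [insert_sdiff_self_of_mem he] at hrk
  rw [lam, lam, hcompl, rk_insert_eq_ite (hX he), hrk]
  split_ifs <;> push_cast <;> grind

end NDP

theorem stmt6_general (M : Matroid α) [M.Finite]
    (X Y : Set α) (hXE : NDP.ExactlySeparating M 3 X) (hY : Y = M.E \ X)
    (x : α) (hx : x ∈ X) :
    NDP.ExactlySeparating M 3 (X \ {x}) ↔
      (x ∈ M.closure (X \ {x}) ∩ M.closure Y ∨
       x ∈ M✶.closure (X \ {x}) ∩ M✶.closure Y) := by
  obtain ⟨hXground, hlam⟩ := hXE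
  have hxE : x ∈ M.E := hXground hx
  have hdual_left : x ∈ M✶.closure (X \ {x}) ↔ x ∉ M.closure Y := by
    rw [mem_dual_closure_iff_notMem_closure_compl ⟨hxE, fun h => h.2 rfl⟩,
      insert_sdiff_self_of_mem hx, hY]
  have hdual_right : x ∈ M✶.closure Y ↔ x ∉ M.closure (X \ {x}) := by
    rw [hY, mem_dual_closure_iff_notMem_closure_compl ⟨hxE, fun h => h.2 hx⟩, ← union_singleton, ← sdiff_sdiff, sdiff_sdiff_cancel_left hXground]
  have hlam_iff := NDP.lam_sdiff_singleton_eq_lam_iff hXground hx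
  rw [hlam, ← hY] at hlam_iff
  rw [NDP.ExactlySeparating, and_iff_right (sdiff_subset.trans hXground), hlam_iff, mem_inter_iff,
    mem_inter_iff, hdual_left, hdual_right]
  exact iff_iff_and_or_not_and_not.trans (or_congr_right and_comm)

/-- With `(X, Y)` exactly 3-separating, `|X| ≥ 3`, `x ∈ X`:
`(X − x, Y ∪ x)` is exactly 3-separating iff `x ∈ cl(X−x) ∩ cl(Y)` or
`x ∈ cl*(X−x) ∩ cl*(Y)`. -/
theorem stmt6 (M : Matroid α) [M.Finite] (hM : NDP.ThreeConnected M)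
    (X Y : Set α) (hXE : NDP.ExactlySeparating M 3 X) (hY : Y = M.E \ X)
    (hcard : 3 ≤ X.ncard) (x : α) (hx : x ∈ X) :
    NDP.ExactlySeparating M 3 (X \ {x}) ↔
      (x ∈ M.closure (X \ {x}) ∩ M.closure Y ∨
       x ∈ M✶.closure (X \ {x}) ∩ M✶.closure Y) :=
  stmt6_general M X Y hXE hY x hx
end

section
/- Let M be a 3-connected matroid containing a set P with M|P ≅ U_{3,5}. Then for each element p ∈ cl(P) − P, the deletion M \ p is 3-connected. -/
open Set Matroid

variable {α β : Type*}

/-!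
Any three elements of a `U_{3,5}`-restriction `P` span `P`, hence span `p`. A `k`-separation
`(X, Y)` of `M \ p` splits the five elements of `P`, so one side contains three of them and
spans `p`. Adding `p` to that side changes neither its rank nor the rank of the whole matroid,
so the separation lifts to a `k`-separation of `M`.
-/

namespace NDP

variable {M N : Matroid α}

lemma rk_eq_toNat_eRk [M.RankFinite] (X : Set α) : rk M X = (M.eRk X).toNat := by
  have hle : ∀ n ∈ {n : ℕ | ∃ I, M.Indep I ∧ I ⊆ X ∧ I.ncard = n}, n ≤ (M.eRk X).toNat := by
    rintro n ⟨I, hI, hIX, rfl⟩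
    exact ENat.toNat_le_toNat (hI.encard_le_eRk_of_subset hIX) (M.isRkFinite_set X).eRk_lt_top.ne
  obtain ⟨I, hI⟩ := M.exists_isBasis' X
  refine le_antisymm (csSup_le ⟨0, ∅, M.empty_indep, empty_subset _, by simp⟩ hle)
    (le_csSup ⟨_, hle⟩ ⟨I, hI.indep, hI.subset, ?_⟩)
  rw [hI.eRk_eq_encard, ncard_def]

lemma rk_insert_of_mem_closure [M.RankFinite] {e : α} {X : Set α} (he : e ∈ M.closure X) :
    rk M (insert e X) = rk M X := by
  rw [rk_eq_toNat_eRk, rk_eq_toNat_eRk, ← eRk_insert_closure_eq, insert_eq_of_mem he,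
    eRk_closure_eq]

lemma rk_restrict {R X : Set α} (hXR : X ⊆ R) : rk (M ↾ R) X = rk M X := by
  unfold rk
  congr 1
  ext n
  constructor
  · rintro ⟨I, hI, hIX, rfl⟩
    exact ⟨I, (restrict_indep_iff.1 hI).1, hIX, rfl⟩
  · rintro ⟨I, hI, hIX, rfl⟩
    exact ⟨I, restrict_indep_iff.2 ⟨hI, hIX.trans hXR⟩, hIX, rfl⟩

lemma lam_compl {X : Set α} (hX : X ⊆ N.E) : lam N (N.E \ X) = lam N X := by
  unfold lam
  rw [sdiff_sdiff_cancel_left hX]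
  ring

lemma IsKSeparation.compl {k : ℕ} {X : Set α} (h : IsKSeparation N k X) :
    IsKSeparation N k (N.E \ X) := by
  obtain ⟨⟨hXE, hlam⟩, hkX, hkY⟩ := h
  exact ⟨⟨sdiff_subset, (lam_compl hXE).trans_le hlam⟩, hkY,
    by rwa [sdiff_sdiff_cancel_left hXE]⟩

lemma IsKSeparation.insert_of_delete [M.Finite] {k : ℕ} {p : α} {X : Set α}
    (hX : IsKSeparation (delete M {p}) k X) (hp : p ∈ M.closure X) :
    IsKSeparation M k (insert p X) := by
  obtain ⟨⟨hXE, hlam⟩, hkX, hkY⟩ := hX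
  change X ⊆ M.E \ {p} at hXE
  change k ≤ ((M.E \ {p}) \ X).ncard at hkY
  have hpE : p ∈ M.E := M.closure_subset_ground X hp
  have hcompl : M.E \ insert p X = (M.E \ {p}) \ X := by rw [insert_eq, sdiff_sdiff]
  have hrkE : rk M M.E = rk M (M.E \ {p}) := by
    rw [← rk_insert_of_mem_closure (M.closure_subset_closure hXE hp), insert_sdiff_singleton,
      insert_eq_of_mem hpE]
  have hlam_eq : lam M (insert p X) = lam (delete M {p}) X := by
    unfold lam delete
    rw [restrict_ground_eq, rk_restrict hXE, rk_restrict sdiff_subset, rk_restrict Subset.rfl,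
      rk_insert_of_mem_closure hp, hcompl, hrkE]
  have hpXE : insert p X ⊆ M.E := insert_subset hpE (hXE.trans sdiff_subset)
  exact ⟨⟨hpXE, hlam_eq.trans_le hlam⟩,
    hkX.trans (ncard_le_ncard (subset_insert _ _) (M.ground_finite.subset hpXE)), hcompl ▸ hkY⟩

lemma UnifRestr.closure_subset_closure_of_le_ncard [M.Finite] {r : ℕ} {P S : Set α}
    (hP : UnifRestr M r P) (hSP : S ⊆ P) (hS : r ≤ S.ncard) :
    M.closure P ⊆ M.closure S := by
  obtain ⟨B, hBS, hBr⟩ := exists_subset_card_eq hS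
  have hBP : B ⊆ P := hBS.trans hSP
  have hB : M.Indep B := (hP.2 B hBP).2 hBr.le
  have hPB : P ⊆ M.closure B := by
    intro q hq
    refine hB.mem_closure_iff'.2 ⟨hP.1 hq, fun hins => by_contra fun hqB => ?_⟩
    have := (hP.2 _ (insert_subset hq hBP)).1 hins
    rw [ncard_insert_of_notMem hqB (M.set_finite B hB.subset_ground)] at this
    omega
  exact (M.closure_subset_closure_of_subset_closure hPB).trans (M.closure_subset_closure hBS)

end NDP

/-- If `M|P ≅ U_{3,5}` in a 3-connected matroid `M`, then `M \ p` is
3-connected for each `p ∈ cl(P) − P`. -/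
theorem stmt14 (M : Matroid α) [M.Finite] (hM : NDP.ThreeConnected M)
    (P : Set α) (hP : NDP.UnifRestr M 3 P) (hcard : P.ncard = 5)
    (p : α) (hp : p ∈ M.closure P \ P) :
    NDP.ThreeConnected (NDP.delete M {p}) := by
  obtain ⟨hpcl, hpP⟩ := hp
  have hPE : P ⊆ M.E \ {p} := subset_sdiff_singleton hP.1 hpP
  intro k hk X hX
  have hsplit : (P ∩ X).ncard + (P \ X).ncard = 5 :=
    hcard ▸ ncard_inter_add_ncard_sdiff_eq_ncard P X (M.ground_finite.subset hP.1)
  by_cases h3 : 3 ≤ (P ∩ X).ncard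
  · refine hM k hk _ (hX.insert_of_delete ?_)
    exact (hP.closure_subset_closure_of_le_ncard inter_subset_left h3).trans
      (M.closure_subset_closure inter_subset_right) hpcl
  · refine hM k hk _ (hX.compl.insert_of_delete ?_)
    exact (hP.closure_subset_closure_of_le_ncard sdiff_subset (by omega)).trans
      (M.closure_subset_closure (sdiff_subset_sdiff_left hPE)) hpcl
end
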